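/- arXiv:1703.07965 — 3 statements merged into one kernel-verified Lean document; each statement's English description precedes it below -/
import Mathlib

section
/- Let $p \geq 2$ and define $\alpha_j^p = \frac{\prod_{\ell=0}^{j}(\ell^2 - p^2)}{(2j+2)!}$ for $1 \leq j \leq p-1$. Then these constants satisfy the recursion: $\alpha_1^2 = 1/2$, $\alpha_1^3 = 3$, $\alpha_2^3 = -1/2$, and for $m \geq 3$: $\alpha_1^{m+1} = \frac{m^2}{2} + 2\alpha_1^m - \alpha_1^{m-1}$, $\alpha_j^{m+1} = 2\alpha_j^m - \alpha_j^{m-1} - \alpha_{j-1}^m$ for $j = 2, \ldots, m-2$, $\alpha_{m-1}^{m+1} = 2\alpha_{m-1}^m - \alpha_{m-2}^m$, and $\alpha_m^{m+1} = -\alpha_{m-1}^m$. -/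
/-!
Write `P_j(x) = ∏_{ℓ=0}^{j} (ℓ² - x²)`, so that `α_j^p = P_j(p) / (2j+2)!`. Up to the sign
`(-1)^(j+1)`, `P_j(x) = x · (x+j)(x+j-1)⋯(x-j)` is the average of the falling factorials of
degree `2j+2` at `x+j+1` and at `x+j`. A second difference lowers the degree of a falling
factorial by two and multiplies it by `(2j+4)(2j+3)`, hence
`P_{j+1}(x+1) - 2 P_{j+1}(x) + P_{j+1}(x-1) = -(2j+4)(2j+3) P_j(x)`, and dividing by `(2j+4)!`
at `x = m` gives `α_{j+1}^{m+1} = 2 α_{j+1}^m - α_{j+1}^{m-1} - α_j^m`. Every stated recursion is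
an instance of this one, together with `α_0^m = -m²/2` and `α_j^p = 0` for `p ≤ j`.
-/

/-- The coefficients of the leap-frog based local time-stepping scheme,
`α_j^p = (∏_{ℓ=0}^{j} (ℓ² - p²)) / (2j+2)!`. -/
noncomputable def alphaLTS (p j : ℕ) : ℝ :=
  (∏ l ∈ Finset.range (j + 1), ((l : ℝ) ^ 2 - (p : ℝ) ^ 2)) / (Nat.factorial (2 * j + 2))

open Polynomial Finset

section

variable {R : Type*} [CommRing R]

theorem descPochhammer_eval_sub_eval_sub_one (n : ℕ) (y : R) :
    (descPochhammer R (n + 1)).eval y - (descPochhammer R (n + 1)).eval (y - 1) =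
      (n + 1) * (descPochhammer R n).eval (y - 1) := by
  have h := congrArg (eval y) (descPochhammer_succ_comp_X_sub_one (R := R) n)
  simp only [eval_comp, eval_sub, eval_X, eval_one, smul_eq_mul, eval_mul, eval_add,
    eval_natCast] at h
  linear_combination -h

theorem descPochhammer_eval_second_diff (n : ℕ) (y : R) :
    (descPochhammer R (n + 2)).eval (y + 1) - 2 * (descPochhammer R (n + 2)).eval y
        + (descPochhammer R (n + 2)).eval (y - 1) =
      (n + 2) * (n + 1) * (descPochhammer R n).eval (y - 1) := by
  have h₁ := descPochhammer_eval_sub_eval_sub_one (n + 1) (y + 1)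
  have h₂ := descPochhammer_eval_sub_eval_sub_one (n + 1) y
  have h₃ := descPochhammer_eval_sub_eval_sub_one n y
  rw [add_sub_cancel_right] at h₁
  push_cast at h₁ h₂ h₃ ⊢
  linear_combination h₁ - h₂ + (n + 2) * h₃

theorem descPochhammer_eval_add_one_add_eval (n : ℕ) (y : R) :
    (descPochhammer R (n + 1)).eval (y + 1) + (descPochhammer R (n + 1)).eval y =
      (2 * y + 1 - n) * (descPochhammer R n).eval y := by
  rw [descPochhammer_succ_eval n y, descPochhammer_succ_left, eval_mul, eval_comp]
  simp only [eval_X, eval_sub, eval_one, add_sub_cancel_right]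
  ring

theorem descPochhammer_succ_succ_eval_add_one (n : ℕ) (y : R) :
    (descPochhammer R (n + 2)).eval (y + 1) = (y + 1) * (descPochhammer R n).eval y * (y - n) := by
  rw [descPochhammer_succ_left, eval_mul, eval_comp, descPochhammer_succ_eval]
  simp only [eval_X, eval_sub, eval_one, add_sub_cancel_right]
  ring

def sqSubSqProd (j : ℕ) (x : R) : R := ∏ l ∈ range (j + 1), ((l : R) ^ 2 - x ^ 2)

theorem sqSubSqProd_eq_descPochhammer (j : ℕ) (x : R) :
    sqSubSqProd j x = (-1) ^ (j + 1) * x * (descPochhammer R (2 * j + 1)).eval (x + j) := by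
  induction j with
  | zero => simp [sqSubSqProd]; ring
  | succ j ih =>
    have h := descPochhammer_succ_succ_eval_add_one (2 * j + 1) (x + j)
    rw [sqSubSqProd, prod_range_succ, ← sqSubSqProd, ih,
      show 2 * (j + 1) + 1 = 2 * j + 1 + 2 by ring]
    push_cast at h ⊢
    rw [← add_assoc, h]
    ring

theorem two_mul_sqSubSqProd (j : ℕ) (x : R) :
    2 * sqSubSqProd j x = (-1) ^ (j + 1) * ((descPochhammer R (2 * j + 2)).eval (x + j + 1) +
      (descPochhammer R (2 * j + 2)).eval (x + j)) := by
  rw [descPochhammer_eval_add_one_add_eval, sqSubSqProd_eq_descPochhammer]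
  push_cast
  ring

theorem sqSubSqProd_second_diff [IsDomain R] [NeZero (2 : R)] (j : ℕ) (x : R) :
    sqSubSqProd (j + 1) (x + 1) - 2 * sqSubSqProd (j + 1) x + sqSubSqProd (j + 1) (x - 1) =
      -((2 * j + 4) * (2 * j + 3) * sqSubSqProd j x) := by
  apply mul_left_cancel₀ (two_ne_zero (α := R))
  have h₁ := descPochhammer_eval_second_diff (2 * j + 2) (x + j + 2)
  have h₂ := descPochhammer_eval_second_diff (2 * j + 2) (x + j + 1)
  have e₁ := two_mul_sqSubSqProd (j + 1) (x + 1)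
  have e₂ := two_mul_sqSubSqProd (j + 1) x
  have e₃ := two_mul_sqSubSqProd (j + 1) (x - 1)
  have e₄ := two_mul_sqSubSqProd j x
  push_cast at h₁ h₂ e₁ e₂ e₃ e₄ ⊢
  ring_nf at h₁ h₂ e₁ e₂ e₃ e₄ ⊢
  linear_combination
    e₁ - 2 * e₂ + e₃ + (-1) ^ j * (h₁ + h₂) + (2 * j + 4) * (2 * j + 3) * e₄

end

theorem alphaLTS_eq_sqSubSqProd (p j : ℕ) :
    alphaLTS p j = sqSubSqProd j (p : ℝ) / (2 * j + 2).factorial := rfl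

theorem alphaLTS_of_le {p j : ℕ} (h : p ≤ j) : alphaLTS p j = 0 := by
  rw [alphaLTS, prod_eq_zero (mem_range.mpr (Nat.lt_succ_of_le h)) (sub_self _), zero_div]

theorem alphaLTS_zero_right (p : ℕ) : alphaLTS p 0 = -(p : ℝ) ^ 2 / 2 := by
  simp [alphaLTS]

theorem alphaLTS_succ {m j : ℕ} (hm : 1 ≤ m) (hj : 1 ≤ j) :
    alphaLTS (m + 1) j = 2 * alphaLTS m j - alphaLTS (m - 1) j - alphaLTS m (j - 1) := by
  obtain ⟨q, rfl⟩ := Nat.exists_eq_add_of_le' hm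
  obtain ⟨i, rfl⟩ := Nat.exists_eq_add_of_le' hj
  have hdiff := sqSubSqProd_second_diff i ((q : ℝ) + 1)
  have hfact : ((2 * (i + 1) + 2).factorial : ℝ) =
      (2 * i + 4) * (2 * i + 3) * (2 * i + 2).factorial := by
    rw [show 2 * (i + 1) + 2 = 2 * i + 2 + 1 + 1 by ring, Nat.factorial_succ, Nat.factorial_succ]
    push_cast
    ring
  simp only [Nat.add_sub_cancel, alphaLTS_eq_sqSubSqProd, hfact]
  push_cast at hdiff ⊢
  rw [add_sub_cancel_right] at hdiff
  field_simp
  linear_combination hdiff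

theorem alphaLTS_recursion :
    alphaLTS 2 1 = 1 / 2 ∧ alphaLTS 3 1 = 3 ∧ alphaLTS 3 2 = -(1 / 2) ∧
    ∀ m : ℕ, 3 ≤ m →
      (alphaLTS (m + 1) 1 = (m : ℝ) ^ 2 / 2 + 2 * alphaLTS m 1 - alphaLTS (m - 1) 1) ∧
      (∀ j : ℕ, 2 ≤ j → j ≤ m - 2 →
        alphaLTS (m + 1) j =
          2 * alphaLTS m j - alphaLTS (m - 1) j - alphaLTS m (j - 1)) ∧
      (alphaLTS (m + 1) (m - 1) = 2 * alphaLTS m (m - 1) - alphaLTS m (m - 2)) ∧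
      (alphaLTS (m + 1) m = -alphaLTS m (m - 1)) := by
  refine ⟨?_, ?_, ?_, fun m hm =>
    ⟨?_, fun j hj _ => alphaLTS_succ (by omega) (by omega), ?_, ?_⟩⟩
  · norm_num [alphaLTS, prod_range_succ, Nat.factorial]
  · norm_num [alphaLTS, prod_range_succ, Nat.factorial]
  · norm_num [alphaLTS, prod_range_succ, Nat.factorial]
  · rw [alphaLTS_succ (by omega) le_rfl, alphaLTS_zero_right]
    ring
  · rw [alphaLTS_succ (by omega) (by omega), alphaLTS_of_le le_rfl, Nat.sub_sub]
    ring
  · rw [alphaLTS_succ (by omega) (by omega), alphaLTS_of_le le_rfl,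
      alphaLTS_of_le (Nat.sub_le m 1)]
    ring
end

section
/- For every integer $p \geq 0$ and every integer $m \geq 0$, the supremum of $|T_p^{(m)}(x)|$ over $x \in [-1,1]$ equals $T_p^{(m)}(1)$, where $T_p$ is the Chebyshev polynomial of the first kind of degree $p$. -/
open Polynomial Polynomial.Chebyshev

/- Each `T_m` satisfies `|T_m| ≤ 1 = T_m(1)` on `[-1, 1]`, and this property is preserved by sums,
so it holds for every `ℕ`-combination of Chebyshev polynomials. Iterated derivatives of `T_p` are
such combinations (`T_iterate_derivative_mem_span_T`). -/

theorem abs_eval_le_eval_one_of_mem_span_T {s : Set ℕ} {q : ℝ[X]}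
    (hq : q ∈ Submodule.span ℕ ((fun m : ℕ => T ℝ m) '' s)) {x : ℝ}
    (hx : x ∈ Set.Icc (-1 : ℝ) 1) :
    |q.eval x| ≤ q.eval 1 := by
  induction hq using Submodule.span_induction with
  | mem _ hT =>
    obtain ⟨m, -, rfl⟩ := hT
    rw [T_eval_one]
    exact abs_eval_T_real_le_one _ (abs_le.mpr hx)
  | zero => simp
  | add q r _ _ hq hr =>
    rw [eval_add, eval_add]
    exact (abs_add_le _ _).trans (add_le_add hq hr)
  | smul n q _ hq =>
    rw [eval_smul, eval_smul, nsmul_eq_mul, nsmul_eq_mul, abs_mul, Nat.abs_cast]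
    exact mul_le_mul_of_nonneg_left hq n.cast_nonneg

theorem chebyshev_iterated_deriv_max_at_one (p m : ℕ) :
    IsGreatest
      ((fun x : ℝ =>
          |(Polynomial.derivative^[m] (Polynomial.Chebyshev.T ℝ (p : ℤ))).eval x|) ''
        Set.Icc (-1 : ℝ) 1)
      ((Polynomial.derivative^[m] (Polynomial.Chebyshev.T ℝ (p : ℤ))).eval 1) := by
  have hbound {x : ℝ} (hx : x ∈ Set.Icc (-1 : ℝ) 1) :=
    abs_eval_le_eval_one_of_mem_span_T (T_iterate_derivative_mem_span_T (R := ℝ) p m) hx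
  have hone : (1 : ℝ) ∈ Set.Icc (-1 : ℝ) 1 := by norm_num
  refine ⟨⟨1, hone, abs_of_nonneg ((abs_nonneg _).trans (hbound hone))⟩, ?_⟩
  rintro _ ⟨x, hx, rfl⟩
  exact hbound hx
end

section
/- Let $S$ be a finite-dimensional real inner product space, $A : S \to S$ a self-adjoint positive definite operator with orthonormal eigenbasis $(\eta_k)_{k=1}^M$ and eigenvalues $\lambda_k > 0$ satisfying $\lambda_k (\Delta t)^2 < 4$ for all $k$, where $\Delta t > 0$. Define the iteration $\begin{pmatrix} v^{(n+1/2)} \\ u^{(n+1)} \end{pmatrix} = \begin{pmatrix} I & -\Delta t A \\ \Delta t I & I - (\Delta t)^2 A \end{pmatrix} \begin{pmatrix} v^{(n-1/2)} \\ u^{(n)} \end{pmatrix}$. Then there exists a constant $C_0$, depending only on the quantity $\max_k \lambda_k (\Delta t)^2$, such that $\|v^{(n+1/2)}\| + \|u^{(n)}\| \leq C_0 (\|v^{(1/2)}\| + \|u^{(1)}\|)$ for all $n \geq 1$, with $C_0$ independent of $n$. -/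
/-!
Pairing the scheme with an eigenvector `η k` decouples it into the scalar leap-frog recursion
`x' = x - Δt λ y`, `y' = y + Δt x'`, which conserves the quadratic energy `x² - Δt λ x y + λ y²`.
The discriminant of this form is `λ (λ Δt² - 4)`, negative under the CFL condition, so the form is
positive definite and its level sets are uniformly bounded. Parseval's identity in the orthonormal
eigenbasis then assembles the modal bounds into one for `‖v n‖² + ‖u n‖²`.
-/

open scoped InnerProductSpace RealInnerProductSpace

-- The smallest eigenvalue of a definite symmetric `2 × 2` matrix is at least determinant / trace.
theorem neg_discrim_mul_sq_add_sq_le (a b c x y : ℝ) :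
    -discrim a b c * (x ^ 2 + y ^ 2) ≤ 4 * (a + c) * (a * x ^ 2 + b * x * y + c * y ^ 2) := by
  rw [discrim]
  nlinarith [sq_nonneg (2 * a * x + b * y), sq_nonneg (2 * c * y + b * x)]

theorem abs_quadratic_le (a b c x y : ℝ) :
    |a * x ^ 2 + b * x * y + c * y ^ 2| ≤ (|a| + |b| + |c|) * (x ^ 2 + y ^ 2) := by
  have hxy : |x * y| ≤ x ^ 2 + y ^ 2 := by
    rw [abs_mul]
    nlinarith [sq_nonneg (|x| - |y|), sq_abs x, sq_abs y, abs_nonneg x, abs_nonneg y]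
  calc |a * x ^ 2 + b * x * y + c * y ^ 2|
      ≤ |a| * x ^ 2 + |b| * |x * y| + |c| * y ^ 2 := by
        refine (abs_add_le _ _).trans (add_le_add ((abs_add_le _ _).trans (add_le_add ?_ ?_)) ?_) <;>
          simp [abs_mul, mul_assoc]
    _ ≤ (|a| + |b| + |c|) * (x ^ 2 + y ^ 2) := by
        nlinarith [abs_nonneg a, abs_nonneg c, sq_nonneg x, sq_nonneg y,
          mul_le_mul_of_nonneg_left hxy (abs_nonneg b)]

theorem exists_sq_add_sq_le_of_quadratic_eq {a b c : ℝ} (hdisc : discrim a b c < 0) :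
    ∃ K, ∀ x y x₀ y₀ : ℝ, a * x ^ 2 + b * x * y + c * y ^ 2 = a * x₀ ^ 2 + b * x₀ * y₀ + c * y₀ ^ 2 →
      x ^ 2 + y ^ 2 ≤ K * (x₀ ^ 2 + y₀ ^ 2) := by
  refine ⟨4 * |a + c| * (|a| + |b| + |c|) / -discrim a b c, fun x y x₀ y₀ h => ?_⟩
  rw [div_mul_eq_mul_div, le_div_iff₀ (neg_pos.mpr hdisc), mul_comm]
  calc -discrim a b c * (x ^ 2 + y ^ 2)
      ≤ 4 * (a + c) * (a * x ^ 2 + b * x * y + c * y ^ 2) := neg_discrim_mul_sq_add_sq_le a b c x y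
    _ ≤ 4 * |a + c| * |a * x₀ ^ 2 + b * x₀ * y₀ + c * y₀ ^ 2| := by
        rw [h]
        exact (le_abs_self _).trans_eq (by rw [abs_mul, abs_mul, abs_of_pos four_pos])
    _ ≤ 4 * |a + c| * (|a| + |b| + |c|) * (x₀ ^ 2 + y₀ ^ 2) := by
        rw [mul_assoc _ (|a| + |b| + |c|)]
        exact mul_le_mul_of_nonneg_left (abs_quadratic_le a b c x₀ y₀) (by positivity)

section LeapfrogMode

variable {dt lam : ℝ} {x y : ℕ → ℝ}

theorem leapfrog_energy_conserved (hx : ∀ n, x (n + 1) = x n - dt * (lam * y n))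
    (hy : ∀ n, y (n + 1) = y n + dt * x (n + 1)) (n : ℕ) :
    x n ^ 2 - dt * lam * x n * y n + lam * y n ^ 2
      = x 0 ^ 2 - dt * lam * x 0 * y 0 + lam * y 0 ^ 2 := by
  induction n with
  | zero => rfl
  | succ n ih => rw [← ih, hy, hx]; ring

theorem exists_leapfrog_mode_bound (hlam : 0 < lam) (hCFL : lam * dt ^ 2 < 4) :
    ∃ K, ∀ x y : ℕ → ℝ, (∀ n, x (n + 1) = x n - dt * (lam * y n)) →
      (∀ n, y (n + 1) = y n + dt * x (n + 1)) → ∀ n, x n ^ 2 + y n ^ 2 ≤ K * (x 0 ^ 2 + y 0 ^ 2) := by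
  have hdisc : discrim 1 (-(dt * lam)) lam < 0 := by
    rw [discrim]
    nlinarith
  obtain ⟨K, hK⟩ := exists_sq_add_sq_le_of_quadratic_eq hdisc
  refine ⟨K, fun x y hx hy n => hK _ _ _ _ ?_⟩
  linarith [leapfrog_energy_conserved hx hy n]

end LeapfrogMode

theorem OrthonormalBasis.inner_apply_of_eigen {𝕜 E ι : Type*} [RCLike 𝕜] [NormedAddCommGroup E]
    [InnerProductSpace 𝕜 E] [Fintype ι] (b : OrthonormalBasis ι 𝕜 E) {A : E →ₗ[𝕜] E}
    {lam : ι → 𝕜} (hA : ∀ i, A (b i) = lam i • b i) (i : ι) (x : E) :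
    ⟪b i, A x⟫_𝕜 = lam i * ⟪b i, x⟫_𝕜 := by
  classical
  suffices (innerₛₗ 𝕜 (b i)) ∘ₗ A = lam i • innerₛₗ 𝕜 (b i) from LinearMap.congr_fun this x
  refine b.toBasis.ext fun j => ?_
  simp only [OrthonormalBasis.coe_toBasis, LinearMap.comp_apply, innerₛₗ_apply_apply, hA,
    inner_smul_right, LinearMap.smul_apply, smul_eq_mul, b.inner_eq_ite]
  split_ifs with hij <;> simp [hij]

theorem OrthonormalBasis.sq_norm_add_sq_norm_le {ι E : Type*} [Fintype ι] [NormedAddCommGroup E]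
    [InnerProductSpace ℝ E] (b : OrthonormalBasis ι ℝ E) {C : ℝ} {x y x₀ y₀ : E}
    (h : ∀ i, ⟪b i, x⟫ ^ 2 + ⟪b i, y⟫ ^ 2 ≤ C * (⟪b i, x₀⟫ ^ 2 + ⟪b i, y₀⟫ ^ 2)) :
    ‖x‖ ^ 2 + ‖y‖ ^ 2 ≤ C * (‖x₀‖ ^ 2 + ‖y₀‖ ^ 2) := by
  simp only [← b.sum_sq_inner_right, ← Finset.sum_add_distrib, Finset.mul_sum]
  exact Finset.sum_le_sum fun i _ => h i

theorem add_le_sqrt_two_mul_mul_add {a b a₀ b₀ C : ℝ} (ha : 0 ≤ a) (hb : 0 ≤ b) (ha₀ : 0 ≤ a₀)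
    (hb₀ : 0 ≤ b₀) (hC : 0 ≤ C) (h : a ^ 2 + b ^ 2 ≤ C * (a₀ ^ 2 + b₀ ^ 2)) :
    a + b ≤ √(2 * C) * (a₀ + b₀) := by
  refine (sq_le_sq₀ (by positivity) (by positivity)).mp ?_
  rw [mul_pow, Real.sq_sqrt (by positivity)]
  nlinarith [sq_nonneg (a - b), mul_nonneg ha₀ hb₀]

theorem leapfrog_stability_general
    {E : Type*} [NormedAddCommGroup E] [InnerProductSpace ℝ E]
    (M : ℕ) (A : E →ₗ[ℝ] E) (η : OrthonormalBasis (Fin M) ℝ E) (lam : Fin M → ℝ)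
    (heig : ∀ k : Fin M, A (η k) = lam k • η k)
    (hpos : ∀ k : Fin M, 0 < lam k)
    (dt : ℝ) (hCFL : ∀ k : Fin M, lam k * dt ^ 2 < 4)
    (v u : ℕ → E)
    (hrec : ∀ n : ℕ, v (n + 1) = v n - dt • A (u n) ∧ u (n + 1) = u n + dt • v (n + 1)) :
    ∃ C0 : ℝ, 0 < C0 ∧ ∀ n : ℕ, ‖v n‖ + ‖u n‖ ≤ C0 * (‖v 0‖ + ‖u 0‖) := by
  choose K hK using fun k => exists_leapfrog_mode_bound (dt := dt) (hpos k) (hCFL k)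
  obtain ⟨C, hC⟩ := (Set.finite_range K).bddAbove
  have hsq (n : ℕ) : ‖v n‖ ^ 2 + ‖u n‖ ^ 2 ≤ max C 1 * (‖v 0‖ ^ 2 + ‖u 0‖ ^ 2) := by
    refine η.sq_norm_add_sq_norm_le fun k => ?_
    have hmode := hK k (fun n => ⟪η k, v n⟫) (fun n => ⟪η k, u n⟫)
      (fun n => by
        simp only [(hrec n).1, inner_sub_right, real_inner_smul_right, η.inner_apply_of_eigen heig])
      (fun n => by simp only [(hrec n).2, inner_add_right, real_inner_smul_right]) n
    exact hmode.trans (mul_le_mul_of_nonneg_right ((hC ⟨k, rfl⟩).trans (le_max_left C 1))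
      (by positivity))
  exact ⟨√(2 * max C 1), by positivity, fun n => add_le_sqrt_two_mul_mul_add (norm_nonneg _)
    (norm_nonneg _) (norm_nonneg _) (norm_nonneg _) (by positivity) (hsq n)⟩

theorem leapfrog_stability
    {E : Type*} [NormedAddCommGroup E] [InnerProductSpace ℝ E] [FiniteDimensional ℝ E]
    (M : ℕ) (A : E →ₗ[ℝ] E) (η : OrthonormalBasis (Fin M) ℝ E) (lam : Fin M → ℝ)
    (heig : ∀ k : Fin M, A (η k) = lam k • η k)
    (hpos : ∀ k : Fin M, 0 < lam k)
    (dt : ℝ) (hdt : 0 < dt) (hCFL : ∀ k : Fin M, lam k * dt ^ 2 < 4)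
    (v u : ℕ → E)
    (hrec : ∀ n : ℕ, v (n + 1) = v n - dt • A (u n) ∧ u (n + 1) = u n + dt • v (n + 1)) :
    ∃ C0 : ℝ, 0 < C0 ∧ ∀ n : ℕ, ‖v n‖ + ‖u n‖ ≤ C0 * (‖v 0‖ + ‖u 0‖) :=
  leapfrog_stability_general M A η lam heig hpos dt hCFL v u hrec
end
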